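/- arXiv:1005.3228 — 5 statements merged into one kernel-verified Lean document; each statement's English description precedes it below -/
import Mathlib

section
/- For every real number α ≥ 1 and every integer m ≥ 1, one has 2·∫_0^1 ( log(α²/ρ²) )^m · e^{−ρ²} · ρ dρ ≤ α² · m!. -/
/-!
Substituting `ρ = α e^{-u/2}`, so that `log (α²/ρ²) = u` and `2ρ dρ = -α² e^{-u} du`, turns the
left side into `α² ∫_{u ≥ 2 log α} u^m e^{-ρ²} e^{-u} du`. Since `α ≥ 1` the range lies in
`u ≥ 0`, where the integrand is nonnegative; dropping `e^{-ρ²} ≤ 1` and enlarging the range to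
`u > 0` bounds it by `α² Γ(m + 1) = α² m!`.
-/

open MeasureTheory Real Set

lemma integrableOn_Ioi_pow_mul_exp_neg (m : ℕ) :
    IntegrableOn (fun u : ℝ => u ^ m * exp (-u)) (Ioi 0) :=
  (GammaIntegral_convergent (s := m + 1) (by positivity)).congr_fun
    (fun u _ => by simp [mul_comm]) measurableSet_Ioi

lemma integral_Ioi_pow_mul_exp_neg (m : ℕ) :
    ∫ u in Ioi (0 : ℝ), u ^ m * exp (-u) = m.factorial := by
  rw [← Gamma_nat_eq_factorial, Gamma_eq_integral (by positivity)]
  exact setIntegral_congr_fun measurableSet_Ioi fun u _ => by simp [mul_comm]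

lemma image_mul_exp_neg_half_Ici {α : ℝ} (hα : 0 < α) :
    (fun u => α * exp (-u / 2)) '' Ici (2 * log α) = Ioc 0 1 := by
  ext ρ
  constructor
  · rintro ⟨u, hu, rfl⟩
    refine ⟨by positivity, ?_⟩
    calc α * exp (-u / 2) ≤ α * exp (-log α) := by gcongr; linarith [mem_Ici.1 hu]
      _ = 1 := by rw [exp_neg, exp_log hα, mul_inv_cancel₀ hα.ne']
  · rintro ⟨hρ0, hρ1⟩
    refine ⟨2 * log α - 2 * log ρ, ?_, ?_⟩
    · exact mem_Ici.2 (by linarith [log_nonpos hρ0.le hρ1])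
    · simp only [show -(2 * log α - 2 * log ρ) / 2 = log ρ - log α by ring, exp_sub,
        exp_log hα, exp_log hρ0]
      field_simp

lemma two_mul_integral_Ioc_mul_self_eq {α : ℝ} (hα : 0 < α) (g : ℝ → ℝ) :
    2 * ∫ ρ in Ioc (0 : ℝ) 1, g ρ * ρ
      = α ^ 2 * ∫ u in Ici (2 * log α), g (α * exp (-u / 2)) * exp (-u) := by
  have hderiv : ∀ u ∈ Ici (2 * log α),
      HasDerivWithinAt (fun u => α * exp (-u / 2)) (α * (exp (-u / 2) * (-1 / 2)))
        (Ici (2 * log α)) u := fun u _ =>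
    (((hasDerivAt_id u).neg.div_const 2).exp.const_mul α).hasDerivWithinAt.congr_deriv
      (by simp)
  have hinj : InjOn (fun u => α * exp (-u / 2)) (Ici (2 * log α)) := fun a _ b _ h => by
    have := exp_injective (mul_left_cancel₀ hα.ne' h)
    linarith
  rw [← image_mul_exp_neg_half_Ici hα,
    integral_image_eq_integral_abs_deriv_smul measurableSet_Ici hderiv hinj,
    ← integral_const_mul, ← integral_const_mul]
  refine setIntegral_congr_fun measurableSet_Ici fun u _ => ?_
  have hsq : exp (-u / 2) ^ 2 = exp (-u) := by rw [← exp_nat_mul]; ring_nf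
  rw [smul_eq_mul, abs_of_neg (by have := exp_pos (-u / 2); nlinarith)]
  linear_combination α ^ 2 * g (α * exp (-u / 2)) * hsq

lemma integral_Ici_pow_mul_mul_exp_neg_le_factorial {L : ℝ} (hL : 0 ≤ L) (m : ℕ) {w : ℝ → ℝ}
    (hw0 : ∀ u, 0 ≤ w u) (hw1 : ∀ u, w u ≤ 1) :
    ∫ u in Ici L, u ^ m * w u * exp (-u) ≤ m.factorial := by
  have hint := integrableOn_Ioi_pow_mul_exp_neg m
  calc ∫ u in Ici L, u ^ m * w u * exp (-u)
      ≤ ∫ u in Ioi L, u ^ m * exp (-u) := by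
        rw [integral_Ici_eq_integral_Ioi]
        refine integral_mono_of_nonneg ?_ (hint.mono_set (Ioi_subset_Ioi hL)) ?_ <;>
        filter_upwards [self_mem_ae_restrict measurableSet_Ioi] with u hu
        · have := hw0 u
          have : 0 ≤ u := hL.trans hu.le
          positivity
        · have : 0 ≤ u := hL.trans hu.le
          calc u ^ m * w u * exp (-u) ≤ u ^ m * 1 * exp (-u) := by gcongr; exact hw1 u
            _ = u ^ m * exp (-u) := by ring
    _ ≤ ∫ u in Ioi 0, u ^ m * exp (-u) :=
        setIntegral_mono_set hint
          (ae_restrict_of_forall_mem measurableSet_Ioi fun u hu => by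
            have : 0 ≤ u := hu.le
            positivity)
          (Ioi_subset_Ioi hL).eventuallyLE
    _ = m.factorial := integral_Ioi_pow_mul_exp_neg m

theorem log_moment_integral_le_inner_general (α : ℝ) (hα : 1 ≤ α) (m : ℕ) :
    2 * ∫ ρ in Set.Ioc (0 : ℝ) 1,
        (Real.log (α ^ 2 / ρ ^ 2)) ^ m * Real.exp (-ρ ^ 2) * ρ
      ≤ α ^ 2 * m.factorial := by
  have hα0 : 0 < α := by linarith
  have hlog : ∀ u, log (α ^ 2 / (α * exp (-u / 2)) ^ 2) = u := fun u => by
    rw [mul_pow, ← exp_nat_mul, div_mul_cancel_left₀ (by positivity), ← exp_neg, log_exp]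
    ring
  rw [two_mul_integral_Ioc_mul_self_eq hα0 fun ρ => log (α ^ 2 / ρ ^ 2) ^ m * exp (-ρ ^ 2)]
  simp only [hlog]
  gcongr α ^ 2 * ?_
  exact integral_Ici_pow_mul_mul_exp_neg_le_factorial (by linarith [log_nonneg hα]) m
    (fun _ => (exp_pos _).le) (fun u => exp_le_one_iff.2 (by nlinarith))

/-- For every real number α ≥ 1 and every integer m ≥ 1, one has
`2·∫_0^1 (log(α²/ρ²))^m · e^{−ρ²} · ρ dρ ≤ α² · m!`, the integral being the Lebesgue
integral over ρ ∈ (0,1]. -/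
theorem log_moment_integral_le_inner (α : ℝ) (hα : 1 ≤ α) (m : ℕ) (hm : 1 ≤ m) :
    2 * ∫ ρ in Set.Ioc (0 : ℝ) 1,
        (Real.log (α ^ 2 / ρ ^ 2)) ^ m * Real.exp (-ρ ^ 2) * ρ
      ≤ α ^ 2 * m.factorial :=
  log_moment_integral_le_inner_general α hα m
end

section
/- For every real number α ≥ 1 and every integer m ≥ 1, one has 2·∫_1^∞ ( log(α²ρ²) )^m · e^{−ρ²} · ρ dρ ≤ α² · m!. -/
/-! The Taylor bound `(log y)^m ≤ m! y` for `y ≥ 1` dominates the integrand by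
`m! α² ρ³ e^{-ρ²}`, and `2 ∫_0^∞ ρ³ e^{-ρ²} dρ = Γ(2) = 1`. -/

open MeasureTheory Set Real

lemma Real.pow_log_le_factorial_mul {y : ℝ} (hy : 1 ≤ y) (m : ℕ) :
    log y ^ m ≤ m.factorial * y := by
  have h := pow_div_factorial_le_exp _ (log_nonneg hy) m
  rwa [exp_log (by linarith), div_le_iff₀ (by positivity), mul_comm] at h

lemma integrableOn_pow_mul_exp_neg_sq (n : ℕ) :
    IntegrableOn (fun x : ℝ => x ^ n * exp (-x ^ 2)) (Ioi 0) := by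
  have h := integrableOn_rpow_mul_exp_neg_rpow (s := n) (by linarith [n.cast_nonneg (α := ℝ)])
    two_pos
  simp only [rpow_natCast, rpow_two] at h
  exact h

lemma integral_pow_odd_mul_exp_neg_sq (n : ℕ) :
    ∫ x in Ioi (0 : ℝ), x ^ (2 * n + 1) * exp (-x ^ 2) = n.factorial / 2 := by
  have h := integral_rpow_mul_exp_neg_rpow two_pos (q := (2 * n + 1 : ℕ))
    (by linarith [(2 * n + 1 : ℕ).cast_nonneg (α := ℝ)])
  rw [show ((2 * n + 1 : ℕ) + 1 : ℝ) / 2 = n + 1 by push_cast; ring,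
    Gamma_nat_eq_factorial] at h
  simp only [rpow_natCast, rpow_two] at h
  rw [h]
  ring

lemma log_sq_mul_sq_pow_mul_exp_neg_sq_mul_mem_Icc {α ρ : ℝ} (hα : 1 ≤ α) (hρ : 1 ≤ ρ)
    (m : ℕ) : log (α ^ 2 * ρ ^ 2) ^ m * exp (-ρ ^ 2) * ρ
      ∈ Icc 0 (m.factorial * α ^ 2 * (ρ ^ 3 * exp (-ρ ^ 2))) := by
  have hy : 1 ≤ α ^ 2 * ρ ^ 2 := one_le_mul_of_one_le_of_one_le (one_le_pow₀ hα) (one_le_pow₀ hρ)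
  have hlog := pow_nonneg (log_nonneg hy) m
  refine ⟨by positivity, ?_⟩
  calc log (α ^ 2 * ρ ^ 2) ^ m * exp (-ρ ^ 2) * ρ
      ≤ m.factorial * (α ^ 2 * ρ ^ 2) * exp (-ρ ^ 2) * ρ := by
        gcongr
        exact Real.pow_log_le_factorial_mul hy m
    _ = m.factorial * α ^ 2 * (ρ ^ 3 * exp (-ρ ^ 2)) := by ring

theorem log_moment_integral_le_outer_general (α : ℝ) (hα : 1 ≤ α) (m : ℕ) :
    2 * ∫ ρ in Set.Ici (1 : ℝ),
        (Real.log (α ^ 2 * ρ ^ 2)) ^ m * Real.exp (-ρ ^ 2) * ρ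
      ≤ α ^ 2 * m.factorial := by
  have hint := integrableOn_pow_mul_exp_neg_sq 3
  have hbound : ∫ ρ in Ici (1 : ℝ), log (α ^ 2 * ρ ^ 2) ^ m * exp (-ρ ^ 2) * ρ
      ≤ m.factorial * α ^ 2 * ∫ ρ in Ici (1 : ℝ), ρ ^ 3 * exp (-ρ ^ 2) := by
    rw [← integral_const_mul]
    refine integral_mono_of_nonneg ?_ ((hint.mono_set (Ici_subset_Ioi.2 one_pos)).const_mul _) ?_
      <;> filter_upwards [ae_restrict_mem measurableSet_Ici] with ρ hρ
    exacts [(log_sq_mul_sq_pow_mul_exp_neg_sq_mul_mem_Icc hα hρ m).1,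
      (log_sq_mul_sq_pow_mul_exp_neg_sq_mul_mem_Icc hα hρ m).2]
  have htail : ∫ ρ in Ici (1 : ℝ), ρ ^ 3 * exp (-ρ ^ 2) ≤ 1 / 2 := by
    calc ∫ ρ in Ici (1 : ℝ), ρ ^ 3 * exp (-ρ ^ 2)
        ≤ ∫ ρ in Ioi (0 : ℝ), ρ ^ 3 * exp (-ρ ^ 2) := by
          refine setIntegral_mono_set hint ?_ (Ici_subset_Ioi.2 one_pos).eventuallyLE
          filter_upwards [ae_restrict_mem measurableSet_Ioi] with ρ (hρ : 0 < ρ)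
          positivity
      _ = 1 / 2 := by simpa using integral_pow_odd_mul_exp_neg_sq 1
  calc 2 * ∫ ρ in Ici (1 : ℝ), log (α ^ 2 * ρ ^ 2) ^ m * exp (-ρ ^ 2) * ρ
      ≤ 2 * (m.factorial * α ^ 2 * (1 / 2)) := by gcongr; exact hbound.trans (by gcongr)
    _ = α ^ 2 * m.factorial := by ring

/-- For every real number α ≥ 1 and every integer m ≥ 1, one has
`2·∫_1^∞ (log(α²ρ²))^m · e^{−ρ²} · ρ dρ ≤ α² · m!`, the integral being the Lebesgue
integral over ρ ∈ [1,∞). -/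
theorem log_moment_integral_le_outer (α : ℝ) (hα : 1 ≤ α) (m : ℕ) (hm : 1 ≤ m) :
    2 * ∫ ρ in Set.Ici (1 : ℝ),
        (Real.log (α ^ 2 * ρ ^ 2)) ^ m * Real.exp (-ρ ^ 2) * ρ
      ≤ α ^ 2 * m.factorial :=
  log_moment_integral_le_outer_general α hα m
end

section
/- For every real number r with 0 < r ≤ 1, one has (1/2π)·∫_0^{2π} log( cos²θ + r²·sin²θ ) dθ = 2·log((1+r)/2). -/
/-!
On the unit circle `z = e^{iθ}` one has `cos θ + i r sin θ = z̄ ((1 + r) z² + (1 - r)) / 2`, so the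
integrand equals `2 log ((1 + r) / 2) + 2 log |z² - a|` with `a = (r - 1) / (1 + r)`, and `|a| < 1`.
Writing `a = w²` splits `log |z² - a|` into `log |z - w| + log |z + w|`, and both have mean zero
over the unit circle because `|w| < 1`.
-/

open Real Metric

theorem circleAverage_log_norm_sq_sub_const {a : ℂ} (ha : ‖a‖ < 1) :
    circleAverage (fun z ↦ log ‖z ^ 2 - a‖) 0 1 = 0 := by
  obtain ⟨w, rfl⟩ := IsAlgClosed.exists_pow_nat_eq a two_pos
  have hw : ‖w‖ < 1 := by
    rw [norm_pow] at ha
    exact (pow_lt_one_iff_of_nonneg (norm_nonneg w) two_ne_zero).1 ha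
  have hsplit : Set.EqOn (fun z ↦ log ‖z ^ 2 - w ^ 2‖)
      (fun z ↦ log ‖z - w‖ + log ‖z - -w‖) (sphere 0 |1|) := by
    intro z hz
    have hz1 : ‖z‖ = 1 := by simpa using hz
    have hne : ∀ u : ℂ, ‖u‖ < 1 → ‖z - u‖ ≠ 0 := fun u hu h ↦ by
      rw [norm_eq_zero, sub_eq_zero] at h
      rw [h] at hz1
      linarith
    dsimp only
    rw [← log_mul (hne w hw) (hne (-w) (by rwa [norm_neg])), ← norm_mul]
    congr 2
    ring
  rw [circleAverage_congr_sphere hsplit, circleAverage_fun_add (by fun_prop) (by fun_prop),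
    circleAverage_log_norm_sub_const₀ hw, circleAverage_log_norm_sub_const₀ (by rwa [norm_neg]),
    add_zero]

theorem re_sq_add_sq_mul_im_sq_of_norm_eq_one (r : ℝ) {z : ℂ} (hz : ‖z‖ = 1) :
    z.re ^ 2 + r ^ 2 * z.im ^ 2 = ‖((1 + r) * z ^ 2 + (1 - r)) / 2‖ ^ 2 := by
  have h : z.re ^ 2 + z.im ^ 2 = 1 := by
    rw [← one_pow 2, ← hz, Complex.sq_norm, Complex.normSq_apply]
    ring
  rw [norm_div, div_pow, Complex.sq_norm, Complex.normSq_apply]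
  simp only [pow_two, Complex.add_re, Complex.add_im, Complex.mul_re, Complex.mul_im,
    Complex.ofReal_re, Complex.ofReal_im, Complex.one_re, Complex.one_im, Complex.sub_re,
    Complex.sub_im, Complex.norm_ofNat]
  grind

theorem abs_sub_one_div_one_add_lt_one {r : ℝ} (hr : 0 < r) : |(r - 1) / (1 + r)| < 1 := by
  rw [abs_div, abs_of_pos (by positivity : 0 < 1 + r), div_lt_one (by positivity), abs_lt]
  constructor <;> linarith

theorem log_re_sq_add_sq_mul_im_sq_of_norm_eq_one {r : ℝ} (hr : 0 < r) {z : ℂ} (hz : ‖z‖ = 1) :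
    log (z.re ^ 2 + r ^ 2 * z.im ^ 2)
      = 2 * log ((1 + r) / 2) + 2 * log ‖z ^ 2 - ((r - 1) / (1 + r) : ℝ)‖ := by
  have hr1 : (1 + r : ℂ) ≠ 0 := by exact_mod_cast (by positivity : 1 + r ≠ 0)
  have hfactor : ((1 + r) * z ^ 2 + (1 - r)) / 2
      = ((1 + r) / 2 : ℝ) * (z ^ 2 - ((r - 1) / (1 + r) : ℝ)) := by
    push_cast
    field_simp
    ring
  have hne : ‖z ^ 2 - ((r - 1) / (1 + r) : ℝ)‖ ≠ 0 := by
    have := norm_sub_norm_le (z ^ 2) ((r - 1) / (1 + r) : ℝ)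
    rw [norm_pow, hz, one_pow, Complex.norm_real, Real.norm_eq_abs] at this
    linarith [abs_sub_one_div_one_add_lt_one hr]
  rw [re_sq_add_sq_mul_im_sq_of_norm_eq_one r hz, hfactor, norm_mul, Complex.norm_real,
    Real.norm_of_nonneg (by positivity), mul_pow, log_mul (by positivity) (pow_ne_zero 2 hne),
    log_pow, log_pow]
  push_cast
  ring

theorem jensen_circle_integral_general (r : ℝ) (hr0 : 0 < r) :
    (1 / (2 * Real.pi)) *
        ∫ θ in (0 : ℝ)..(2 * Real.pi),
          Real.log (Real.cos θ ^ 2 + r ^ 2 * Real.sin θ ^ 2)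
      = 2 * Real.log ((1 + r) / 2) := by
  set a : ℂ := (((r - 1) / (1 + r) : ℝ) : ℂ)
  have ha : ‖a‖ < 1 := by
    rw [Complex.norm_real, Real.norm_eq_abs]
    exact abs_sub_one_div_one_add_lt_one hr0
  have hint : CircleIntegrable (fun z ↦ log ‖z ^ 2 - a‖) 0 1 :=
    MeromorphicOn.circleIntegrable_log_norm fun _ _ ↦ by fun_prop
  calc (1 / (2 * π)) * ∫ θ in (0 : ℝ)..(2 * π), log (cos θ ^ 2 + r ^ 2 * sin θ ^ 2)
      = circleAverage (fun z ↦ log (z.re ^ 2 + r ^ 2 * z.im ^ 2)) 0 1 := by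
        simp [circleAverage_def, circleMap_zero, Complex.exp_ofReal_mul_I_re,
          Complex.exp_ofReal_mul_I_im]
    _ = circleAverage (fun z ↦ 2 * log ((1 + r) / 2) + 2 * log ‖z ^ 2 - a‖) 0 1 :=
        circleAverage_congr_sphere fun z hz ↦
          log_re_sq_add_sq_mul_im_sq_of_norm_eq_one hr0 (by simpa using hz)
    _ = 2 * log ((1 + r) / 2) := by
        rw [circleAverage_fun_add (circleIntegrable_const _ _ _) (by exact hint.const_mul 2),
          circleAverage_const]
        simp_rw [← smul_eq_mul (a := (2 : ℝ)), circleAverage_fun_smul,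
          circleAverage_log_norm_sq_sub_const ha, smul_zero, add_zero]

/-- For every real number r with 0 < r ≤ 1,
`(1/2π)·∫_0^{2π} log(cos²θ + r²·sin²θ) dθ = 2·log((1+r)/2)`. -/
theorem jensen_circle_integral (r : ℝ) (hr0 : 0 < r) (hr1 : r ≤ 1) :
    (1 / (2 * Real.pi)) *
        ∫ θ in (0 : ℝ)..(2 * Real.pi),
          Real.log (Real.cos θ ^ 2 + r ^ 2 * Real.sin θ ^ 2)
      = 2 * Real.log ((1 + r) / 2) :=
  jensen_circle_integral_general r hr0
end

section
/- For every k ≥ 1 and every z ∈ ℂ^{k+1} ∖ {0}, there exist an orthogonal matrix A ∈ O(k+1, ℝ) (acting ℂ-linearly on ℂ^{k+1} by extension of scalars), a scalar λ ∈ ℂ ∖ {0}, and a real number r ∈ [0,1], such that A·z = λ·(e_0 + i·r·e_1), where e_0, e_1 are the first two standard basis vectors; moreover, for such r one has |z_0² + ⋯ + z_k²|/|z|² = (1−r²)/(1+r²). -/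
/-!
Multiplying `z` by a unit scalar `μ` with `μ² ∑ zᵢ² = |∑ zᵢ²|` makes `∑ wᵢ²` real and nonnegative
for `w = μ z`. Writing `w = x + i y` with `x, y` real, `∑ wᵢ² = |x|² - |y|² + 2i⟨x, y⟩`, so `x ⊥ y`
and `|y| ≤ |x|`. An orthonormal basis containing `x / |x|` and `y / |y|` gives an orthogonal `A`
with `A w = |x| e₀ + i |y| e₁`; take `λ = μ⁻¹ |x|` and `r = |y| / |x|`. Then
`|∑ zᵢ²| / |z|² = (|x|² - |y|²) / (|x|² + |y|²) = (1 - r²) / (1 + r²)`.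
-/

open scoped RealInnerProductSpace
open Matrix Module Complex

theorem exists_orthonormalBasis_norm_smul_eq {ι E : Type*} [Fintype ι] [NormedAddCommGroup E]
    [InnerProductSpace ℝ E] [FiniteDimensional ℝ E] (hcard : finrank ℝ E = Fintype.card ι)
    {v : ι → E} (hv : Pairwise fun i j => ⟪v i, v j⟫ = 0) :
    ∃ b : OrthonormalBasis ι ℝ E, ∀ i, ‖v i‖ • b i = v i := by
  have hu : Orthonormal ℝ ({i | v i ≠ 0}.domRestrict fun i => ‖v i‖⁻¹ • v i) := by
    refine ⟨fun i => norm_smul_inv_norm i.2, fun i j hij => ?_⟩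
    simp [real_inner_smul_left, real_inner_smul_right, hv (Subtype.coe_ne_coe.mpr hij)]
  obtain ⟨b, hb⟩ := hu.exists_orthonormalBasis_extension_of_card_eq hcard
  refine ⟨b, fun i => ?_⟩
  by_cases hi : v i = 0
  · simp [hi]
  · rw [hb i hi, smul_inv_smul₀ (norm_ne_zero_iff.mpr hi)]

theorem Matrix.exists_orthogonal_mulVec_eq_single {ι : Type*} [Fintype ι] [DecidableEq ι]
    {v : ι → EuclideanSpace ℝ ι} (hv : Pairwise fun i j => ⟪v i, v j⟫ = 0) :
    ∃ A : Matrix ι ι ℝ, Aᵀ * A = 1 ∧ ∀ i, A *ᵥ (v i).ofLp = Pi.single i ‖v i‖ := by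
  obtain ⟨b, hb⟩ := exists_orthonormalBasis_norm_smul_eq (by simp) hv
  let e := EuclideanSpace.basisFun ι ℝ
  have hrepr (x : EuclideanSpace ℝ ι) : b.toBasis.toMatrix e *ᵥ x.ofLp = b.repr x :=
    e.toBasis.toMatrix_mulVec_repr b.toBasis x
  refine ⟨b.toBasis.toMatrix e, ?_, fun i => ?_⟩
  · simpa [mem_orthogonalGroup_iff'] using b.toMatrix_orthonormalBasis_mem_orthogonal e
  · conv_lhs => rw [hrepr, ← hb i]
    simp [← Pi.single_smul']

variable {ι : Type*} [Fintype ι]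

def reVec (w : ι → ℂ) : EuclideanSpace ℝ ι := WithLp.toLp 2 fun i => (w i).re

def imVec (w : ι → ℂ) : EuclideanSpace ℝ ι := WithLp.toLp 2 fun i => (w i).im

theorem norm_reVec_sq_sub_norm_imVec_sq (w : ι → ℂ) :
    ‖reVec w‖ ^ 2 - ‖imVec w‖ ^ 2 = (∑ i, w i ^ 2).re := by
  simp only [reVec, imVec, EuclideanSpace.real_norm_sq_eq]
  simp [Complex.re_sum, sq, Finset.sum_sub_distrib]

theorem two_mul_inner_reVec_imVec (w : ι → ℂ) :
    2 * ⟪reVec w, imVec w⟫ = (∑ i, w i ^ 2).im := by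
  simp only [reVec, imVec, PiLp.inner_apply, Complex.im_sum, Finset.mul_sum]
  simp only [RCLike.inner_apply, conj_trivial, sq, mul_im]
  exact Finset.sum_congr rfl fun _ _ => by ring

theorem norm_reVec_sq_add_norm_imVec_sq (w : ι → ℂ) :
    ‖reVec w‖ ^ 2 + ‖imVec w‖ ^ 2 = ∑ i, ‖w i‖ ^ 2 := by
  simp only [reVec, imVec, EuclideanSpace.real_norm_sq_eq, ← Finset.sum_add_distrib]
  exact Finset.sum_congr rfl fun i _ => by rw [Complex.sq_norm, normSq_apply]; ring

theorem Matrix.map_ofReal_mulVec {m : Type*} (A : Matrix m ι ℝ) (w : ι → ℂ) :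
    A.map ofReal *ᵥ w = fun i => ((A *ᵥ (reVec w).ofLp) i : ℂ) + (A *ᵥ (imVec w).ofLp) i * I := by
  ext i
  simp only [reVec, imVec, mulVec, dotProduct, map_apply, ofReal_sum, ofReal_mul, Finset.sum_mul,
    ← Finset.sum_add_distrib]
  refine Finset.sum_congr rfl fun j _ => ?_
  conv_lhs => rw [← re_add_im (w j)]
  ring

theorem Matrix.exists_orthogonal_map_ofReal_mulVec_eq [DecidableEq ι] {i₀ i₁ : ι} (h : i₀ ≠ i₁)
    {w : ι → ℂ} (hw : ⟪reVec w, imVec w⟫ = 0) :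
    ∃ A : Matrix ι ι ℝ, Aᵀ * A = 1 ∧ A.map ofReal *ᵥ w =
      fun i => if i = i₀ then (‖reVec w‖ : ℂ) else if i = i₁ then ‖imVec w‖ * I else 0 := by
  set v : ι → EuclideanSpace ℝ ι :=
    fun i => if i = i₀ then reVec w else if i = i₁ then imVec w else 0
  have hv : Pairwise fun i j => ⟪v i, v j⟫ = 0 := by
    intro i j hij
    simp only [v]
    split_ifs <;> simp_all [real_inner_comm]
  obtain ⟨A, hA, hAv⟩ := exists_orthogonal_mulVec_eq_single hv
  have h₀ : A *ᵥ (reVec w).ofLp = Pi.single i₀ ‖reVec w‖ := by simpa [v] using hAv i₀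
  have h₁ : A *ᵥ (imVec w).ofLp = Pi.single i₁ ‖imVec w‖ := by simpa [v, h.symm] using hAv i₁
  refine ⟨A, hA, ?_⟩
  ext i
  rw [map_ofReal_mulVec, h₀, h₁]
  rcases eq_or_ne i i₀ with rfl | hi₀
  · simp [h]
  · simp [hi₀, Pi.single_apply, apply_ite ofReal, ite_mul]

theorem Complex.exists_norm_eq_one_and_sq_mul_eq_norm (q : ℂ) :
    ∃ μ : ℂ, ‖μ‖ = 1 ∧ μ ^ 2 * q = ‖q‖ := by
  set μ := exp (↑(-q.arg / 2) * I)
  have hμ : μ ^ 2 * exp (q.arg * I) = 1 := by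
    rw [← exp_nat_mul, ← exp_add, ← exp_zero]
    push_cast
    ring_nf
  refine ⟨μ, norm_exp_ofReal_mul_I _, ?_⟩
  calc μ ^ 2 * q = μ ^ 2 * (‖q‖ * exp (q.arg * I)) := by rw [norm_mul_exp_arg_mul_I]
    _ = (‖q‖ : ℂ) := by rw [mul_left_comm, hμ, mul_one]

theorem exists_norm_eq_one_inner_reVec_imVec_smul_eq_zero (z : ι → ℂ) :
    ∃ μ : ℂ, ‖μ‖ = 1 ∧ ⟪reVec (μ • z), imVec (μ • z)⟫ = 0 ∧
      ‖reVec (μ • z)‖ ^ 2 - ‖imVec (μ • z)‖ ^ 2 = ‖∑ i, z i ^ 2‖ ∧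
      ‖reVec (μ • z)‖ ^ 2 + ‖imVec (μ • z)‖ ^ 2 = ∑ i, ‖z i‖ ^ 2 := by
  obtain ⟨μ, hμ, hμz⟩ := exists_norm_eq_one_and_sq_mul_eq_norm (∑ i, z i ^ 2)
  have hsq : ∑ i, (μ • z) i ^ 2 = ‖∑ i, z i ^ 2‖ := by
    simp [mul_pow, ← Finset.mul_sum, hμz]
  refine ⟨μ, hμ, ?_, ?_, ?_⟩
  · have h := two_mul_inner_reVec_imVec (μ • z)
    rw [hsq, ofReal_im] at h
    linarith
  · rw [norm_reVec_sq_sub_norm_imVec_sq, hsq, ofReal_re]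
  · simpa [hμ] using norm_reVec_sq_add_norm_imVec_sq (μ • z)

/-- A slice for the action of the real orthogonal group on `ℂP^k`: every nonzero
`z ∈ ℂ^{k+1}` can be mapped, by a real orthogonal matrix `A` acting `ℂ`-linearly and up to a
nonzero complex scalar `λ`, to `e₀ + i·r·e₁` for some `r ∈ [0,1]`; moreover for such `r`,
`|z_0² + ⋯ + z_k²|/|z|² = (1−r²)/(1+r²)`. -/
theorem orthogonal_slice (k : ℕ) (hk : 1 ≤ k) (z : Fin (k + 1) → ℂ) (hz : z ≠ 0) :
    ∃ (A : Matrix (Fin (k + 1)) (Fin (k + 1)) ℝ) (lam : ℂ) (r : ℝ),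
      Aᵀ * A = 1 ∧ lam ≠ 0 ∧ 0 ≤ r ∧ r ≤ 1 ∧
      ((A.map fun t => (t : ℂ)).mulVec z =
        fun i => lam * (if i = 0 then 1 else if i = 1 then Complex.I * r else 0)) ∧
      ‖∑ i, z i ^ 2‖ / (∑ i, ‖z i‖ ^ 2)
        = (1 - r ^ 2) / (1 + r ^ 2) := by
  obtain ⟨μ, hμ, hxy, hsub, hadd⟩ := exists_norm_eq_one_inner_reVec_imVec_smul_eq_zero z
  set w := μ • z
  have hμ₀ : μ ≠ 0 := by rintro rfl; simp at hμ
  have hyx : ‖imVec w‖ ≤ ‖reVec w‖ :=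
    (pow_le_pow_iff_left₀ (norm_nonneg _) (norm_nonneg _) two_ne_zero).mp
      (by linarith [norm_nonneg (∑ i, z i ^ 2)])
  have hx : 0 < ‖reVec w‖ := by
    obtain ⟨i, hi⟩ := Function.ne_iff.mp hz
    have : 0 < ∑ i, ‖z i‖ ^ 2 :=
      Finset.sum_pos' (fun _ _ => by positivity) ⟨i, Finset.mem_univ i, by positivity⟩
    nlinarith [norm_nonneg (imVec w)]
  have h01 : (0 : Fin (k + 1)) ≠ 1 := by
    obtain ⟨m, rfl⟩ := Nat.exists_eq_add_of_le' hk
    exact Fin.zero_ne_one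
  obtain ⟨A, hA, hAw⟩ := exists_orthogonal_map_ofReal_mulVec_eq h01 hxy
  refine ⟨A, μ⁻¹ * ‖reVec w‖, ‖imVec w‖ / ‖reVec w‖, hA, by simp [hμ₀, hx.ne'], by positivity,
    div_le_one_of_le₀ hyx hx.le, ?_, ?_⟩
  · have hzw : z = μ⁻¹ • w := by simp [w, hμ₀]
    have : (‖reVec w‖ : ℂ) ≠ 0 := by exact_mod_cast hx.ne'
    rw [hzw, mulVec_smul, hAw]
    ext i
    simp only [Pi.smul_apply, smul_eq_mul, mul_ite, mul_zero]
    split_ifs <;> push_cast <;> field_simp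
  · rw [← hsub, ← hadd]
    field_simp
end

section
/- For every z ∈ ℂ with Im z > 0, one has ∫_{ℝ²} log(|a_0 + a_1·z|²) · (e^{−(a_0²+a_1²)}/π) da_0 da_1 = ∫_0^∞ e^{−t} log t dt + log( |z + i|² / 4 ). -/
/-!
In polar coordinates `a = r (cos θ, sin θ)` the integrand splits as
`log r² + log |cos θ + z sin θ|²` times the radial density `e^{-r²}/π`, so the integral is a
radial part plus an angular part. The substitution `t = r²` turns the radial part into
`∫ e^{-t} log t`. For the angular part, with `ζ = e^{iθ}` one has
`cos θ + z sin θ = ζ⁻¹ p(ζ)` for `p = (-i(z + i) X² + i(z - i)) / 2`, so the angular mean of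
`log |cos θ + z sin θ|` is the log Mahler measure of `p`. The roots `±α` of `p` satisfy
`|α|² = |z - i| / |z + i| ≤ 1` when `Im z ≥ 0`, hence that Mahler measure is the log of the
leading coefficient, `log (|z + i| / 2)`.
-/

open MeasureTheory Set Real Polynomial

section

variable {E : Type*} [NormedAddCommGroup E] [NormedSpace ℝ E]

theorem integral_Ioi_smul_comp_sq (g : ℝ → E) :
    ∫ r in Ioi 0, r • g (r ^ 2) = (2 : ℝ)⁻¹ • ∫ t in Ioi 0, g t := by
  rw [← integral_comp_rpow_Ioi_of_pos (g := g) two_pos, ← integral_smul]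
  refine setIntegral_congr_fun measurableSet_Ioi fun r _ ↦ ?_
  rw [smul_smul, rpow_two, show (2 : ℝ) - 1 = 1 by norm_num, rpow_one]
  field_simp

theorem integrableOn_Ioi_smul_comp_sq_iff (g : ℝ → E) :
    IntegrableOn (fun r ↦ r • g (r ^ 2)) (Ioi 0) ↔ IntegrableOn g (Ioi 0) := by
  rw [← integrableOn_Ioi_comp_rpow_iff g two_ne_zero, IntegrableOn,
    ← integrable_smul_iff (two_ne_zero' ℝ)]
  refine integrableOn_congr_fun (fun r _ ↦ ?_) measurableSet_Ioi
  simp only [Pi.smul_apply, smul_smul, rpow_two, abs_two]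
  norm_num

theorem circleAverage_eq_setIntegral_Ioo (f : ℂ → E) (c : ℂ) (R : ℝ) :
    circleAverage f c R = (2 * π)⁻¹ • ∫ θ in Ioo (-π) π, f (circleMap c R θ) := by
  have hper : Function.Periodic (fun θ ↦ f (circleMap c R θ)) (2 * π) :=
    fun θ ↦ by simp only [periodic_circleMap c R θ]
  have hshift := hper.intervalIntegral_add_eq (-π) 0
  rw [zero_add] at hshift
  rw [circleAverage_def, ← hshift, show -π + 2 * π = π by ring,
    intervalIntegral.integral_of_le (by linarith [pi_pos]), integral_Ioc_eq_integral_Ioo]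

end

theorem integrableOn_exp_neg_mul_log : IntegrableOn (fun t ↦ exp (-t) * log t) (Ioi 0) := by
  have hsplit : Ioi (0 : ℝ) ⊆ Icc 0 1 ∪ Ioi 1 := fun t ht ↦ by
    rcases le_or_gt t 1 with h | h
    exacts [Or.inl ⟨le_of_lt ht, h⟩, Or.inr h]
  refine IntegrableOn.mono_set (IntegrableOn.union ?_ ?_) hsplit
  · have hlog : IntegrableOn log (Icc 0 1) := by
      rw [integrableOn_Icc_iff_integrableOn_Ioc,
        ← intervalIntegrable_iff_integrableOn_Ioc_of_le zero_le_one]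
      exact intervalIntegral.intervalIntegrable_log'
    exact hlog.continuousOn_mul (by fun_prop) isCompact_Icc
  · have hGamma : IntegrableOn (fun t ↦ exp (-t) * t ^ ((2 : ℝ) - 1)) (Ioi 1) :=
      (GammaIntegral_convergent two_pos).mono_set (Ioi_subset_Ioi zero_le_one)
    refine hGamma.mono' ?_ ?_
    · exact (by fun_prop : Continuous fun t ↦ exp (-t)).aestronglyMeasurable.mul
        measurable_log.aestronglyMeasurable
    · filter_upwards [ae_restrict_mem measurableSet_Ioi] with t (ht : 1 < t)
      rw [norm_mul, norm_of_nonneg (exp_pos _).le, norm_of_nonneg (log_nonneg ht.le),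
        show (2 : ℝ) - 1 = 1 by norm_num, rpow_one]
      gcongr
      linarith [log_le_sub_one_of_pos (zero_lt_one.trans ht)]

theorem integral_Ioi_mul_exp_neg_sq : ∫ r in Ioi 0, r * exp (-r ^ 2) = 2⁻¹ := by
  simpa only [smul_eq_mul, integral_exp_neg_Ioi_zero, mul_one] using
    integral_Ioi_smul_comp_sq fun t ↦ exp (-t)

theorem integrableOn_Ioi_mul_exp_neg_sq : IntegrableOn (fun r ↦ r * exp (-r ^ 2)) (Ioi 0) :=
  (integrableOn_Ioi_smul_comp_sq_iff fun t ↦ exp (-t)).mpr (integrableOn_exp_neg_Ioi 0)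

theorem integral_Ioi_mul_exp_neg_sq_mul_log_sq :
    ∫ r in Ioi 0, r * (exp (-r ^ 2) * log (r ^ 2)) = 2⁻¹ * ∫ t in Ioi 0, exp (-t) * log t :=
  integral_Ioi_smul_comp_sq fun t ↦ exp (-t) * log t

theorem integrableOn_Ioi_mul_exp_neg_sq_mul_log_sq :
    IntegrableOn (fun r ↦ r * (exp (-r ^ 2) * log (r ^ 2))) (Ioi 0) :=
  (integrableOn_Ioi_smul_comp_sq_iff fun t ↦ exp (-t) * log t).mpr integrableOn_exp_neg_mul_log

theorem logMahlerMeasure_C_mul_X_sq_add_C {a b : ℂ} (ha : a ≠ 0) (hba : ‖b‖ ≤ ‖a‖) :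
    (C a * X ^ 2 + C b).logMahlerMeasure = log ‖a‖ := by
  obtain ⟨α, hα⟩ := IsAlgClosed.exists_pow_nat_eq (-(b / a)) two_pos
  have hfactor : C a * X ^ 2 + C b = C a * ((X - C α) * (X + C α)) := by
    have : b = -(a * α ^ 2) := by rw [hα]; field_simp
    subst this
    simp only [map_neg, map_mul, map_pow]
    ring
  have hα_le : ‖α‖ ≤ 1 := by
    have : ‖α‖ ^ 2 ≤ 1 := by
      rw [← norm_pow, hα, norm_neg, norm_div]
      exact div_le_one_of_le₀ hba (norm_nonneg a)
    nlinarith [norm_nonneg α]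
  have hroots : (X - C α) * (X + C α) ≠ 0 := mul_ne_zero (X_sub_C_ne_zero α) (X_add_C_ne_zero α)
  rw [hfactor, logMahlerMeasure_C_mul ha hroots,
    logMahlerMeasure_mul_eq_add_logMahlerMeasure hroots, logMahlerMeasure_X_sub_C, logMahlerMeasure_X_add_C,
    (posLog_eq_zero_iff _).mpr (by simpa using hα_le)]
  ring

theorem cos_add_sin_mul_eq (z : ℂ) (θ : ℝ) :
    (cos θ : ℂ) + sin θ * z = (circleMap 0 1 θ)⁻¹ *
      (C (-Complex.I * (z + Complex.I) / 2) * X ^ 2 + C (Complex.I * (z - Complex.I) / 2)).eval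
        (circleMap 0 1 θ) := by
  simp only [circleMap, zero_add, Complex.ofReal_one, one_mul, eval_add, eval_mul, eval_C,
    eval_pow, eval_X, Complex.ofReal_cos, Complex.ofReal_sin, Complex.cos, Complex.sin,
    neg_mul, Complex.exp_neg]
  field_simp
  ring_nf
  simp only [Complex.I_sq]
  ring

theorem norm_sub_I_le_norm_add_I {z : ℂ} (hz : 0 ≤ z.im) :
    ‖z - Complex.I‖ ≤ ‖z + Complex.I‖ := by
  rw [← sq_le_sq₀ (norm_nonneg _) (norm_nonneg _), Complex.sq_norm, Complex.sq_norm,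
    Complex.normSq_apply, Complex.normSq_apply]
  simp only [Complex.sub_re, Complex.sub_im, Complex.add_re, Complex.add_im, Complex.I_re,
    Complex.I_im]
  nlinarith

theorem setIntegral_log_norm_cos_add_sin_mul_sq {z : ℂ} (hz : 0 ≤ z.im) :
    ∫ θ in Ioo (-π) π, log (‖(cos θ : ℂ) + sin θ * z‖ ^ 2) =
      2 * π * log (‖z + Complex.I‖ ^ 2 / 4) := by
  set p : ℂ[X] :=
    C (-Complex.I * (z + Complex.I) / 2) * X ^ 2 + C (Complex.I * (z - Complex.I) / 2)
  have hnorm (θ : ℝ) : ‖(cos θ : ℂ) + sin θ * z‖ = ‖p.eval (circleMap 0 1 θ)‖ := by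
    rw [cos_add_sin_mul_eq, norm_mul, norm_inv, norm_circleMap_zero, abs_one, inv_one, one_mul]
  have hzI : z + Complex.I ≠ 0 := fun h ↦ by
    have := congrArg Complex.im h
    simp only [Complex.add_im, Complex.I_im, Complex.zero_im] at this
    linarith
  have hp : p.logMahlerMeasure = log (‖z + Complex.I‖ / 2) := by
    rw [logMahlerMeasure_C_mul_X_sq_add_C (by simp [hzI])]
    · simp
    · simpa using div_le_div_of_nonneg_right (norm_sub_I_le_norm_add_I hz) zero_le_two
  calc ∫ θ in Ioo (-π) π, log (‖(cos θ : ℂ) + sin θ * z‖ ^ 2)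
      = 2 * ∫ θ in Ioo (-π) π, log ‖p.eval (circleMap 0 1 θ)‖ := by
        simp_rw [Real.log_pow, hnorm, ← integral_const_mul]; norm_num
    _ = 2 * (2 * π * p.logMahlerMeasure) := by
        rw [logMahlerMeasure_def, circleAverage_eq_setIntegral_Ioo, smul_eq_mul]
        field_simp [pi_pos.ne']
    _ = 2 * π * log (‖z + Complex.I‖ ^ 2 / 4) := by
        rw [hp, show (4 : ℝ) = 2 ^ 2 by norm_num, ← div_pow, Real.log_pow]
        push_cast; ring

theorem cos_add_sin_mul_ne_zero {z : ℂ} (hz : z.im ≠ 0) (θ : ℝ) :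
    (cos θ : ℂ) + sin θ * z ≠ 0 := by
  intro h
  have him := congrArg Complex.im h
  have hre := congrArg Complex.re h
  simp only [Complex.add_im, Complex.add_re, Complex.mul_im, Complex.mul_re, Complex.ofReal_re,
    Complex.ofReal_im, Complex.zero_im, Complex.zero_re, zero_mul, zero_add, add_zero, sub_zero]
    at him hre
  have hsin : sin θ = 0 := (mul_eq_zero.mp him).resolve_right hz
  have hcos : cos θ = 0 := by simpa [hsin] using hre
  simpa [hsin, hcos] using sin_sq_add_cos_sq θ

theorem log_norm_sq_polarCoord_symm {z : ℂ} (hz : z.im ≠ 0) {r : ℝ} (hr : 0 < r) (θ : ℝ) :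
    log (‖((polarCoord.symm (r, θ)).1 : ℂ) + (polarCoord.symm (r, θ)).2 * z‖ ^ 2) =
      log (r ^ 2) + log (‖(cos θ : ℂ) + sin θ * z‖ ^ 2) := by
  have hc := norm_ne_zero_iff.mpr (cos_add_sin_mul_ne_zero hz θ)
  have hfactor :
      ((r * cos θ : ℝ) : ℂ) + (r * sin θ : ℝ) * z = r * ((cos θ : ℂ) + sin θ * z) := by
    push_cast; ring
  rw [polarCoord_symm_apply, hfactor, norm_mul, Complex.norm_real, norm_of_nonneg hr.le, mul_pow,
    log_mul (by positivity) (pow_ne_zero 2 hc)]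

theorem integrableOn_log_norm_cos_add_sin_mul_sq {z : ℂ} (hz : z.im ≠ 0) :
    IntegrableOn (fun θ : ℝ ↦ log (‖(cos θ : ℂ) + sin θ * z‖ ^ 2)) (Ioo (-π) π) := by
  have hcont : Continuous fun θ : ℝ ↦ log (‖(cos θ : ℂ) + sin θ * z‖ ^ 2) :=
    (by fun_prop : Continuous fun θ : ℝ ↦ ‖(cos θ : ℂ) + sin θ * z‖ ^ 2).log
      fun θ ↦ pow_ne_zero 2 (norm_ne_zero_iff.mpr (cos_add_sin_mul_ne_zero hz θ))
  exact hcont.integrableOn_Icc.mono_set Ioo_subset_Icc_self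

theorem setIntegral_prod_mul_add_mul {α β L : Type*} [MeasurableSpace α] [MeasurableSpace β]
    [RCLike L] {μ : Measure α} {ν : Measure β} [SFinite μ] [SFinite ν] {s : Set α} {t : Set β}
    {f₁ f₂ : α → L} {g₁ g₂ : β → L} (hf₁ : IntegrableOn f₁ s μ) (hg₁ : IntegrableOn g₁ t ν)
    (hf₂ : IntegrableOn f₂ s μ) (hg₂ : IntegrableOn g₂ t ν) :
    ∫ p in s ×ˢ t, (f₁ p.1 * g₁ p.2 + f₂ p.1 * g₂ p.2) ∂μ.prod ν =
      (∫ x in s, f₁ x ∂μ) * (∫ y in t, g₁ y ∂ν) + (∫ x in s, f₂ x ∂μ) * ∫ y in t, g₂ y ∂ν := by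
  rw [integral_add, setIntegral_prod_mul, setIntegral_prod_mul] <;>
    rw [← Measure.prod_restrict]
  exacts [hf₁.mul_prod hg₁, hf₂.mul_prod hg₂]

/-- For `z` in the upper half-plane, the expectation, for a standard Gaussian vector
`(a_0, a_1)` on `ℝ²`, of `log |a_0 + a_1 z|²` equals
`∫_0^∞ e^{−t} log t dt + log(|z + i|²/4)`. -/
theorem gaussian_log_linear_form (z : ℂ) (hz : 0 < z.im) :
    ∫ a : ℝ × ℝ,
        Real.log (‖(a.1 : ℂ) + (a.2 : ℂ) * z‖ ^ 2) *
          (Real.exp (-(a.1 ^ 2 + a.2 ^ 2)) / Real.pi)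
      = (∫ t in Set.Ioi (0 : ℝ), Real.exp (-t) * Real.log t) +
        Real.log (‖z + Complex.I‖ ^ 2 / 4) := by
  have hpolar : ∀ p ∈ Ioi (0 : ℝ) ×ˢ Ioo (-π) π,
      p.1 • (log (‖((polarCoord.symm p).1 : ℂ) + (polarCoord.symm p).2 * z‖ ^ 2) *
        (exp (-((polarCoord.symm p).1 ^ 2 + (polarCoord.symm p).2 ^ 2)) / π)) =
      p.1 * (exp (-p.1 ^ 2) * log (p.1 ^ 2)) / π * 1 +
        p.1 * exp (-p.1 ^ 2) / π * log (‖(cos p.2 : ℂ) + sin p.2 * z‖ ^ 2) := by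
    rintro ⟨r, θ⟩ ⟨hr, -⟩
    rw [log_norm_sq_polarCoord_symm hz.ne' hr, polarCoord_symm_apply]
    simp only [mul_pow, ← mul_add, cos_sq_add_sin_sq, mul_one, smul_eq_mul]
    ring
  have hlength : ∫ _ in Ioo (-π) π, (1 : ℝ) = 2 * π := by simp [two_mul, pi_pos.le]
  rw [← integral_comp_polarCoord_symm, polarCoord_target, Measure.volume_eq_prod,
    setIntegral_congr_fun (measurableSet_Ioi.prod measurableSet_Ioo) hpolar,
    setIntegral_prod_mul_add_mul (integrableOn_Ioi_mul_exp_neg_sq_mul_log_sq.div_const π)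
      (integrableOn_const (by simp)) (integrableOn_Ioi_mul_exp_neg_sq.div_const π)
      (integrableOn_log_norm_cos_add_sin_mul_sq hz.ne'),
    integral_div, integral_div, integral_Ioi_mul_exp_neg_sq_mul_log_sq,
    integral_Ioi_mul_exp_neg_sq, hlength, setIntegral_log_norm_cos_add_sin_mul_sq hz.le]
  field_simp
end
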